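/- arXiv:1503.00139 — 13 statements merged into one kernel-verified Lean document; each statement's English description precedes it below -/
import Mathlib

section
/- Let G be a self-contained graph, P a removable subgraph of G, and Q an induced subgraph of G \ P with nonempty vertex set. Then Q is a removable subgraph of G \ P if and only if the induced subgraph of G on V(P) ∪ V(Q) is a removable subgraph of G. -/
open SimpleGraph Function Set

/-- `s` is the vertex set of a removable subgraph of `G`: it is nonempty, proper,
and deleting it yields a graph isomorphic to `G`. -/
def IsRemovable {V : Type*} (G : SimpleGraph V) (s : Set V) : Prop :=
  s.Nonempty ∧ s ≠ Set.univ ∧ Nonempty (G ≃g (G.induce sᶜ))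

/-- `G` is self-contained: isomorphic to a proper induced subgraph of itself. -/
def SelfContained {V : Type*} (G : SimpleGraph V) : Prop :=
  ∃ t : Set V, t ≠ Set.univ ∧ Nonempty (G ≃g G.induce t)

/-- The vertex set of the foundation of `G`: vertices in no removable subgraph. -/
def FndSet {V : Type*} (G : SimpleGraph V) : Set V :=
  {v | ∀ s : Set V, IsRemovable G s → v ∉ s}

/-- The set of twisted vertices for a removable vertex set `h`. -/
def TorSet {V : Type*} (G : SimpleGraph V) (h : Set V) : Set V :=
  {v | (∃ s, IsRemovable G s ∧ v ∈ s) ∧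
    ∃ hv : v ∈ hᶜ, (⟨v, hv⟩ : ↥hᶜ) ∈ FndSet (G.induce hᶜ)}

theorem stmt1 {V : Type*} (G : SimpleGraph V) (hG : SelfContained G)
    (p : Set V) (hp : IsRemovable G p)
    (q : Set V) (hq : q ⊆ pᶜ) (hqne : q.Nonempty) :
    IsRemovable (G.induce pᶜ) (Subtype.val ⁻¹' q) ↔ IsRemovable G (p ∪ q) := by
  obtain ⟨hpne, hpuniv, ⟨g⟩⟩ := hp
  have E : (G.induce pᶜ).induce (Subtype.val ⁻¹' q)ᶜ ≃g G.induce (p ∪ q)ᶜ :=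
    { toFun := fun x => ⟨x.1.1, fun h => h.elim x.1.2 x.2⟩
      invFun := fun v => ⟨⟨v.1, fun h => v.2 (Or.inl h)⟩, fun h => v.2 (Or.inr h)⟩
      left_inv := fun x => rfl
      right_inv := fun v => rfl
      map_rel_iff' := Iff.rfl }
  constructor
  · rintro ⟨h1, h2, ⟨f⟩⟩
    refine ⟨hpne.mono Set.subset_union_left, ?_, ⟨(g.trans f).trans E⟩⟩
    obtain ⟨x, hx⟩ := Set.ne_univ_iff_exists_notMem _ |>.mp h2
    exact Set.ne_univ_iff_exists_notMem _ |>.mpr ⟨x.1, fun h => h.elim x.2 hx⟩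
  · rintro ⟨h1, h2, ⟨f⟩⟩
    obtain ⟨v, hv⟩ := hqne
    refine ⟨⟨⟨v, hq hv⟩, hv⟩, ?_, ⟨(g.symm.trans f).trans E.symm⟩⟩
    obtain ⟨x, hx⟩ := Set.ne_univ_iff_exists_notMem _ |>.mp h2
    exact Set.ne_univ_iff_exists_notMem _ |>.mpr
      ⟨⟨x, fun h => hx (Or.inl h)⟩, fun h => hx (Or.inr h)⟩
end

section
/- Let G be a self-contained graph and H a removable subgraph of G. Then G contains infinitely many pairwise vertex-disjoint induced subgraphs each isomorphic to H. -/
open SimpleGraph Function Set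

theorem stmt2 {V : Type*} (G : SimpleGraph V) (hG : SelfContained G)
    (h : Set V) (hh : IsRemovable G h) :
    ∃ f : ℕ → Set V, (Pairwise fun i j => Disjoint (f i) (f j)) ∧
      ∀ n, Nonempty ((G.induce h) ≃g (G.induce (f n))) := by
  obtain ⟨-, -, ⟨φ⟩⟩ := hh
  set e : V → V := fun v => (φ v : V) with he
  have hinj : Function.Injective e := fun a b hab => φ.injective (Subtype.val_injective hab)
  have hadj : ∀ a b, G.Adj (e a) (e b) ↔ G.Adj a b := by
    intro a b
    have := φ.map_rel_iff (a := a) (b := b)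
    simpa [SimpleGraph.comap] using this
  have hrange : ∀ v, e v ∈ hᶜ := fun v => (φ v).2
  have key : ∀ s : Set V, Nonempty ((G.induce s) ≃g (G.induce (e '' s))) := by
    intro s
    refine ⟨{ toEquiv := Equiv.Set.image e s hinj, map_rel_iff' := ?_ }⟩
    intro a b
    simp [Equiv.Set.image, Equiv.Set.imageOfInjOn, hadj]
  refine ⟨fun n => e^[n] '' h, ?_, ?_⟩
  · -- disjointness
    have hdisj : ∀ k, 1 ≤ k → Disjoint h (e^[k] '' h) := by
      intro k hk
      rw [Set.disjoint_right]
      rintro x ⟨y, -, rfl⟩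
      obtain ⟨m, rfl⟩ := Nat.exists_eq_add_of_le hk
      rw [add_comm, Function.iterate_succ_apply']
      exact hrange _
    have main : ∀ i j, i < j → Disjoint (e^[i] '' h) (e^[j] '' h) := by
      intro i j hij
      obtain ⟨k, rfl⟩ := Nat.exists_eq_add_of_lt hij
      have : e^[i + k + 1] '' h = e^[i] '' (e^[k + 1] '' h) := by
        rw [add_assoc, Function.iterate_add, Set.image_comp]
      rw [this]
      exact (Set.disjoint_image_iff (hinj.iterate i)).2 (hdisj (k + 1) (Nat.le_add_left 1 k))
    intro i j hij
    rcases lt_or_gt_of_ne hij with hlt | hlt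
    · exact main i j hlt
    · exact (main j i hlt).symm
  · intro n
    induction n with
    | zero =>
      show Nonempty ((G.induce h) ≃g (G.induce (e^[0] '' h)))
      rw [Function.iterate_zero, Set.image_id]
      exact ⟨Iso.refl⟩
    | succ n ih =>
      obtain ⟨ψ⟩ := ih
      have heq : e^[n + 1] '' h = e '' (e^[n] '' h) := by
        rw [Function.iterate_succ', Set.image_comp]
      show Nonempty ((G.induce h) ≃g (G.induce (e^[n + 1] '' h)))
      rw [heq]
      obtain ⟨χ⟩ := key (e^[n] '' h)
      exact ⟨ψ.trans χ⟩
end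

section
/- A self-contained graph has infinitely many removable subgraphs. -/
open SimpleGraph Function Set

lemma induce_image_iso {V : Type*} (G : SimpleGraph V) (f : V → V)
    (hinj : Injective f) (hadj : ∀ u v, G.Adj (f u) (f v) ↔ G.Adj u v) (A : Set V) :
    Nonempty (G.induce A ≃g G.induce (f '' A)) := by
  refine ⟨⟨Equiv.Set.image f A hinj, ?_⟩⟩
  intro a b
  simp [Equiv.Set.image, Equiv.Set.imageOfInjOn, SimpleGraph.comap_adj, hadj]

lemma removable_step {V : Type*} (G : SimpleGraph V) {s : Set V} (hs : IsRemovable G s) :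
    ∃ s', IsRemovable G s' ∧ s ⊂ s' := by
  obtain ⟨hne, hprop, ⟨e⟩⟩ := hs
  set f : V → V := fun v => (e v : V) with hf
  have hinj : Injective f := fun a b h => e.injective (Subtype.ext h)
  have hrange : range f = sᶜ := by
    ext v; constructor
    · rintro ⟨u, rfl⟩; exact (e u).2
    · intro hv; exact ⟨e.symm ⟨v, hv⟩, by simp [hf]⟩
  have hadj : ∀ u v, G.Adj (f u) (f v) ↔ G.Adj u v := by
    intro u v
    have := e.map_rel_iff (a := u) (b := v)
    simpa [SimpleGraph.comap_adj] using this
  refine ⟨s ∪ f '' s, ⟨?_, ?_, ?_⟩, ?_⟩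
  · exact hne.mono subset_union_left
  · obtain ⟨v, hv⟩ := Set.nonempty_compl.mpr hprop
    intro h
    have : f v ∈ s ∪ f '' s := h ▸ Set.mem_univ _
    rcases this with h1 | h1
    · have : f v ∈ sᶜ := hrange ▸ Set.mem_range_self v
      exact this h1
    · obtain ⟨u, hu, huv⟩ := h1
      exact hv (hinj huv ▸ hu)
  · have hc : (s ∪ f '' s)ᶜ = f '' sᶜ := by
      ext v
      simp only [Set.mem_compl_iff, Set.mem_union, Set.mem_image, not_or]
      constructor
      · rintro ⟨h1, h2⟩
        have : v ∈ range f := hrange ▸ (Set.mem_compl h1)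
        obtain ⟨u, rfl⟩ := this
        exact ⟨u, fun hu => h2 ⟨u, hu, rfl⟩, rfl⟩
      · rintro ⟨u, hu, rfl⟩
        have h1 : f u ∈ sᶜ := hrange ▸ Set.mem_range_self u
        exact ⟨h1, fun ⟨w, hw, hwu⟩ => hu (hinj hwu ▸ hw)⟩
    rw [hc]
    obtain ⟨e2⟩ := induce_image_iso G f hinj hadj sᶜ
    exact ⟨e.trans e2⟩
  · constructor
    · exact subset_union_left
    · intro hsub
      obtain ⟨v, hv⟩ := hne
      have h1 : f v ∈ s := hsub (Or.inr ⟨v, hv, rfl⟩)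
      have h2 : f v ∈ sᶜ := hrange ▸ Set.mem_range_self v
      exact h2 h1

theorem stmt3 {V : Type*} (G : SimpleGraph V) (hG : SelfContained G) :
    {s : Set V | IsRemovable G s}.Infinite := by
  obtain ⟨t, htu, ⟨e⟩⟩ := hG
  obtain ⟨v, hv⟩ := (Set.ne_univ_iff_exists_notMem t).mp htu
  have h0 : IsRemovable G tᶜ := by
    refine ⟨⟨v, hv⟩, ?_, ?_⟩
    · rw [Set.ne_univ_iff_exists_notMem]
      exact ⟨(e v : V), fun h => h (e v).2⟩
    · rw [compl_compl]; exact ⟨e⟩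
  have step : ∀ s : {s : Set V // IsRemovable G s},
      ∃ s' : {s : Set V // IsRemovable G s}, s.1 ⊂ s'.1 := by
    rintro ⟨s, hs⟩
    obtain ⟨s', hs', hsub⟩ := removable_step G hs
    exact ⟨⟨s', hs'⟩, hsub⟩
  choose g hg using step
  have hmono : StrictMono (fun n => ((g^[n] ⟨tᶜ, h0⟩ : {s : Set V // IsRemovable G s}) : Set V)) := by
    apply strictMono_nat_of_lt_succ
    intro n
    simpa [Function.iterate_succ_apply'] using hg (g^[n] ⟨tᶜ, h0⟩)
  apply Set.infinite_of_injective_forall_mem (f := fun n : ℕ => ((g^[n] ⟨tᶜ, h0⟩ : {s : Set V // IsRemovable G s}) : Set V))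
  · exact hmono.injective
  · exact fun n => (g^[n] ⟨tᶜ, h0⟩).2
end

section
/- Let G be a self-contained graph and H a removable subgraph of G. Then the foundation of G is an induced subgraph of the foundation of G \ H, i.e., every vertex of Fnd(G) is a vertex of Fnd(G \ H). -/
open SimpleGraph Function Set

theorem stmt4 {V : Type*} (G : SimpleGraph V) (hG : SelfContained G)
    (h : Set V) (hh : IsRemovable G h) (v : V) (hv : v ∈ FndSet G) :
    ∃ hvh : v ∈ hᶜ, (⟨v, hvh⟩ : ↥hᶜ) ∈ FndSet (G.induce hᶜ) := by
  have hvh : v ∈ hᶜ := hv h hh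
  refine ⟨hvh, fun s hs hvs => ?_⟩
  obtain ⟨hne, hproper, ⟨φ⟩⟩ := hh
  obtain ⟨sne, sproper, ⟨ψ⟩⟩ := hs
  set t : Set V := h ∪ (Subtype.val '' s) with ht
  have htrem : IsRemovable G t := by
    refine ⟨hne.mono (Set.subset_union_left), ?_, ?_⟩
    · intro hcon
      obtain ⟨x, hx⟩ : ∃ x : ↥hᶜ, x ∉ s := by
        by_contra hcon2
        push_neg at hcon2
        exact sproper (Set.eq_univ_of_forall hcon2)
      have : x.1 ∈ t := hcon ▸ Set.mem_univ _
      rcases this with h1 | h2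
      · exact x.2 h1
      · obtain ⟨y, hy, hyx⟩ := h2
        exact hx (by rwa [Subtype.val_injective hyx] at hy)
    · refine ⟨φ.trans (ψ.trans ?_)⟩
      refine ⟨⟨fun a => ⟨a.1.1, ?_⟩, fun b => ⟨⟨b.1, fun hb => b.2 (Or.inl hb)⟩,
          fun hb => b.2 (Or.inr ⟨_, hb, rfl⟩)⟩, fun a => rfl, fun b => rfl⟩, Iff.rfl⟩
      rintro (h1 | ⟨y, hy, hyx⟩)
      · exact a.1.2 h1
      · exact a.2 (Subtype.val_injective hyx ▸ hy)
  exact hv t htrem (Or.inr ⟨_, hvs, rfl⟩)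
end

section
/- Let G be a connected self-contained graph whose foundation is empty (every vertex of G lies in some removable subgraph). Then G contains a ray, i.e., a one-way infinite path as a subgraph. -/
open SimpleGraph Function Set

/-!
If `G` were rayless, its vertex set would carry a Schmidt rank: finitely many vertices can be
deleted so that every remaining component has smaller rank. Since every vertex lies in a
removable subgraph, every finite vertex set lies in one (removable sets of `G - s ≅ G` lift to
`G`), so a copy of `G` survives inside `G` minus any finite set; being connected, it sits in a
single component of smaller rank. Induction on the rank rules this out.
-/

namespace SimpleGraph

section Rank

variable {W : Type*} {H : SimpleGraph W} {A B : Set W} {v w : W}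

variable (H) in
def componentWithin (A : Set W) (v : W) : Set W :=
  {w | v ∈ A ∧ w ∈ A ∧ ((⊤ : H.Subgraph).induce A).spanningCoe.Reachable v w}

lemma componentWithin_subset : componentWithin H A v ⊆ A := fun _ hw => hw.2.1

lemma mem_componentWithin_self (hv : v ∈ A) : v ∈ componentWithin H A v := ⟨hv, hv, .rfl⟩

lemma componentWithin_eq_of_mem (hw : w ∈ componentWithin H A v) :
    componentWithin H A w = componentWithin H A v := by
  ext x
  exact ⟨fun hx => ⟨hw.1, hx.2.1, hw.2.2.trans hx.2.2⟩,
    fun hx => ⟨hw.2.1, hx.2.1, hw.2.2.symm.trans hx.2.2⟩⟩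

lemma exists_adj_mem_componentWithin_diff (hw : w ∈ componentWithin H A v) (hne : w ≠ v) :
    ∃ v', H.Adj v v' ∧ w ∈ componentWithin H (componentWithin H A v \ {v}) v' := by
  obtain ⟨hv, hwA, hvw⟩ := hw
  rw [reachable_iff_reflTransGen] at hvw
  induction hvw with
  | refl => exact absurd rfl hne
  | @tail u w hvu huw ih =>
    have hw' : w ∈ componentWithin H A v \ {v} :=
      ⟨⟨hv, hwA, ((reachable_iff_reflTransGen _ _).mpr hvu).trans
        (Adj.reachable huw)⟩, hne⟩
    by_cases huv : u = v
    · subst huv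
      exact ⟨w, huw.2.2, mem_componentWithin_self hw'⟩
    · obtain ⟨v', hvv', hu⟩ := ih huv huw.1
      exact ⟨v', hvv', hu.1, hw', hu.2.2.trans (Adj.reachable ⟨hu.2.1, hw', huw.2.2⟩)⟩

lemma Connected.range_subset_componentWithin {V : Type*} {G : SimpleGraph V} (hc : G.Connected)
    (f : G →g H) (hf : ∀ x, f x ∈ B) (x₀ : V) : range f ⊆ componentWithin H B (f x₀) := by
  rintro _ ⟨x, rfl⟩
  let f' : G →g ((⊤ : H.Subgraph).induce B).spanningCoe :=
    ⟨f, fun hxy => ⟨hf _, hf _, f.map_adj hxy⟩⟩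
  exact ⟨hf x₀, hf x, (hc x₀ x).map f'⟩

/-- Schmidt's rank of rayless graphs in predicate form: a derivation of `IsRanked H A` plays the
role of the ordinal rank of `A`. -/
inductive IsRanked (H : SimpleGraph W) : Set W → Prop
  | mk (A S : Set W) (hS : S.Finite)
      (h : ∀ v ∈ A \ S, IsRanked H (componentWithin H (A \ S) v)) : IsRanked H A

lemma mem_of_not_isRanked_componentWithin (h : ¬ IsRanked H (componentWithin H A v)) : v ∈ A := by
  by_contra hv
  have hempty : componentWithin H A v = ∅ := eq_empty_of_forall_notMem fun _ hw => hv hw.1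
  exact h (hempty ▸ .mk ∅ ∅ finite_empty (by simp))

lemma exists_not_isRanked_componentWithin (h : ¬ IsRanked H A) :
    ∃ v, ¬ IsRanked H (componentWithin H A v) := by
  by_contra! hall
  exact h (.mk A ∅ finite_empty (by simpa using fun v _ => hall v))

lemma exists_adj_not_isRanked (h : ¬ IsRanked H (componentWithin H A v)) :
    ∃ v', H.Adj v v' ∧ ¬ IsRanked H (componentWithin H (componentWithin H A v \ {v}) v') := by
  by_contra! hall
  refine h (.mk _ {v} (finite_singleton v) fun w hw => ?_)
  obtain ⟨v', hvv', hwv'⟩ := exists_adj_mem_componentWithin_diff hw.1 hw.2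
  exact componentWithin_eq_of_mem hwv' ▸ hall v' hvv'

/-- König-style descent: always step to a neighbour whose component, after deleting the current
vertex, is still unranked. -/
theorem exists_ray_of_not_isRanked (h : ¬ IsRanked H A) :
    ∃ f : ℕ → W, Injective f ∧ ∀ n, H.Adj (f n) (f (n + 1)) := by
  obtain ⟨v₀, hv₀⟩ := exists_not_isRanked_componentWithin h
  let State := {p : Set W × W // ¬ IsRanked H (componentWithin H p.1 p.2)}
  choose next hadj hnext using fun s : State => exists_adj_not_isRanked s.2
  let step : State → State := fun s =>
    ⟨(componentWithin H s.1.1 s.1.2 \ {s.1.2}, next s), hnext s⟩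
  let state : ℕ → State := fun n => step^[n] ⟨(A, v₀), hv₀⟩
  have state_succ (n : ℕ) : state (n + 1) = step (state n) := iterate_succ_apply' _ _ _
  have hmem (n : ℕ) : (state n).1.2 ∈ (state n).1.1 :=
    mem_of_not_isRanked_componentWithin (state n).2
  have hsub (n : ℕ) : (state (n + 1)).1.1 ⊆ (state n).1.1 \ {(state n).1.2} := by
    rw [state_succ]
    exact sdiff_subset_sdiff_left componentWithin_subset
  have hanti : Antitone fun n => (state n).1.1 :=
    antitone_nat_of_succ_le fun n => (hsub n).trans sdiff_subset
  refine ⟨fun n => (state n).1.2, .of_lt_imp_ne fun m n hmn heq => ?_, fun n => ?_⟩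
  · exact (hsub m (hanti hmn (hmem n))).2 heq.symm
  · simpa only [state_succ] using hadj (state n)

end Rank

section Removable

variable {V W : Type*} {G : SimpleGraph V} {H : SimpleGraph W}

noncomputable def induceInduceIso (G : SimpleGraph V) (A : Set V) (B : Set A) :
    (G.induce A).induce B ≃g G.induce (Subtype.val '' B) where
  toEquiv := Equiv.Set.image Subtype.val B Subtype.val_injective
  map_rel_iff' := Iff.rfl

lemma IsRemovable.image (e : G ≃g H) {s : Set V} (hs : IsRemovable G s) :
    IsRemovable H (e '' s) := by
  obtain ⟨hne, hproper, ⟨ψ⟩⟩ := hs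
  refine ⟨hne.image e, fun huniv => hproper ?_, ?_⟩
  · exact e.injective.image_injective (huniv.trans (image_univ_of_surjective e.surjective).symm)
  · rw [← image_compl_eq e.bijective]
    exact ⟨e.symm.trans (ψ.trans (e.induce e.injective.injOn.bijOn_image))⟩

lemma fndSet_eq_empty_iff : FndSet G = ∅ ↔ ∀ v, ∃ s, IsRemovable G s ∧ v ∈ s := by
  simp [FndSet, eq_empty_iff_forall_notMem]

lemma Iso.fndSet_eq_empty (e : G ≃g H) (hf : FndSet G = ∅) : FndSet H = ∅ := by
  rw [fndSet_eq_empty_iff] at hf ⊢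
  intro w
  obtain ⟨s, hs, hws⟩ := hf (e.symm w)
  exact ⟨e '' s, hs.image e, e.symm w, hws, e.apply_symm_apply w⟩

lemma IsRemovable.union_image_val {s : Set V} (hs : IsRemovable G s) {t : Set ↥sᶜ}
    (ht : IsRemovable (G.induce sᶜ) t) : IsRemovable G (s ∪ Subtype.val '' t) := by
  obtain ⟨hne, -, ⟨ψ⟩⟩ := hs
  obtain ⟨-, htproper, ⟨φ⟩⟩ := ht
  have hcompl : Subtype.val '' tᶜ = (s ∪ Subtype.val '' t)ᶜ := by
    rw [compl_union, image_compl_eq_range_sdiff_image Subtype.val_injective, Subtype.range_val,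
      sdiff_eq_compl_inter, inter_comm]
  refine ⟨hne.mono subset_union_left, fun huniv => htproper ?_, ?_⟩
  · rwa [huniv, compl_univ, image_eq_empty, compl_empty_iff] at hcompl
  · rw [← hcompl]
    exact ⟨ψ.trans (φ.trans (induceInduceIso G sᶜ tᶜ))⟩

lemma exists_isRemovable_superset [Nonempty V] (hf : FndSet G = ∅) {F : Set V} (hF : F.Finite) :
    ∃ s, IsRemovable G s ∧ F ⊆ s := by
  induction F, hF using Finite.induction_on with
  | empty =>
    obtain ⟨s, hs, -⟩ := fndSet_eq_empty_iff.mp hf (Classical.arbitrary V)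
    exact ⟨s, hs, empty_subset s⟩
  | @insert a F _ _ ih =>
    obtain ⟨s, hs, hFs⟩ := ih
    by_cases has : a ∈ s
    · exact ⟨s, hs, insert_subset has hFs⟩
    obtain ⟨ψ⟩ := hs.2.2
    obtain ⟨t, ht, hat⟩ := fndSet_eq_empty_iff.mp (ψ.fndSet_eq_empty hf) ⟨a, has⟩
    exact ⟨_, hs.union_image_val ht,
      insert_subset (Or.inr ⟨_, hat, rfl⟩) (hFs.trans subset_union_left)⟩

/-- Deleting a removable superset of the finitely many vertices that map into `S` yields a copy of
`G` whose image avoids `S`, and being connected it lies in a single component of `A \ S`. -/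
theorem IsRanked.not_range_subset {A : Set W} (hA : IsRanked H A) (hc : G.Connected)
    (hf : FndSet G = ∅) (f : G ↪g H) : ¬ range f ⊆ A := by
  induction hA generalizing f with
  | mk A S hS _ ih =>
    intro hfA
    have := hc.nonempty
    obtain ⟨s, hs, hSs⟩ := exists_isRemovable_superset hf (hS.preimage f.injective.injOn)
    obtain ⟨ψ⟩ := hs.2.2
    let g : G ↪g H := f.comp ((Embedding.induce sᶜ).comp ψ.toEmbedding)
    have hg (x : V) : g x ∈ A \ S := ⟨hfA (mem_range_self _), fun hx => (ψ x).2 (hSs hx)⟩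
    obtain ⟨x₀⟩ := hc.nonempty
    exact ih (g x₀) (hg x₀) g (hc.range_subset_componentWithin g.toHom hg x₀)

end Removable

end SimpleGraph

theorem stmt5_general {V : Type*} (G : SimpleGraph V)
    (hc : G.Connected) (hf : FndSet G = ∅) :
    ∃ f : ℕ → V, Function.Injective f ∧ ∀ n, G.Adj (f n) (f (n + 1)) := by
  by_cases hR : IsRanked G univ
  · exact absurd (subset_univ _) (hR.not_range_subset hc hf Embedding.refl)
  · exact exists_ray_of_not_isRanked hR

theorem stmt5 {V : Type*} (G : SimpleGraph V) (hG : SelfContained G)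
    (hc : G.Connected) (hf : FndSet G = ∅) :
    ∃ f : ℕ → V, Function.Injective f ∧ ∀ n, G.Adj (f n) (f (n + 1)) :=
  stmt5_general G hc hf
end

section
/- Let G be a connected rayless self-contained graph. Then the foundation of G is nonempty; that is, there exists a vertex of G that belongs to no removable subgraph of G. -/
open SimpleGraph Function Set

/-!
If the foundation were empty, every vertex would lie in a removable set. Removable sets can then
be enlarged to swallow any given vertex: if `f : G ↪g G` has range `sᶜ` and `t` is removable, so
is `s ∪ f '' t`. Since deleting a removable set leaves a copy of `G`, its complement is connected.
This yields a ray: keep the already visited vertices inside a removable set `s`, walk from the tip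
outside `s` to a vertex outside a larger removable set `s' ⊇ s ∪ {tip}`, and stop at the first
vertex leaving `s'`; the new vertices avoid `s`, hence all earlier ones.
-/

section

variable {V W : Type*} {G : SimpleGraph V} {H : SimpleGraph W}

lemma SimpleGraph.Embedding.nonempty_iso_induce_image (f : G ↪g H) (A : Set V) :
    Nonempty (G.induce A ≃g H.induce (f '' A)) := by
  have hrange : range (f.comp (Embedding.induce A)) = f '' A := by
    rw [Embedding.coe_comp, range_comp]
    exact congrArg _ Subtype.range_coe
  rw [← hrange]
  exact ⟨(f.comp (Embedding.induce A)).isoInduceRange⟩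

lemma IsRemovable.exists_embedding {s : Set V} (hs : IsRemovable G s) :
    ∃ f : G ↪g G, range f = sᶜ := by
  obtain ⟨φ⟩ := hs.2.2
  refine ⟨(Embedding.induce sᶜ).comp φ.toEmbedding, ?_⟩
  rw [Embedding.coe_comp, range_comp, Iso.toEmbedding, RelIso.coe_toRelEmbedding,
    EquivLike.range_eq_univ, image_univ]
  exact Subtype.range_coe

lemma IsRemovable.union_image {s t : Set V} (hs : IsRemovable G s) {f : G ↪g G}
    (hf : range f = sᶜ) (ht : IsRemovable G t) : IsRemovable G (s ∪ f '' t) := by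
  have hcompl : (s ∪ f '' t)ᶜ = f '' tᶜ := by
    rw [image_compl_eq_range_sdiff_image f.injective, hf, compl_union, sdiff_eq]
  obtain ⟨ψ⟩ := ht.2.2
  obtain ⟨χ⟩ := f.nonempty_iso_induce_image tᶜ
  refine ⟨hs.1.mono subset_union_left, ?_, ?_⟩
  · rw [← nonempty_compl, hcompl]
    exact (nonempty_compl.mpr ht.2.1).image f
  · rw [hcompl]
    exact ⟨ψ.trans χ⟩

lemma IsRemovable.exists_insert_subset (hcov : ∀ v, ∃ t, IsRemovable G t ∧ v ∈ t)
    {s : Set V} (hs : IsRemovable G s) (v : V) :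
    ∃ s', IsRemovable G s' ∧ insert v s ⊆ s' := by
  by_cases hv : v ∈ s
  · exact ⟨s, hs, insert_subset hv subset_rfl⟩
  obtain ⟨f, hf⟩ := hs.exists_embedding
  obtain ⟨u, rfl⟩ : v ∈ range f := hf ▸ hv
  obtain ⟨t, ht, hut⟩ := hcov u
  exact ⟨s ∪ f '' t, hs.union_image hf ht,
    insert_subset (Or.inr (mem_image_of_mem f hut)) subset_union_left⟩

lemma IsRemovable.connected_induce_compl (hc : G.Connected) {s : Set V}
    (hs : IsRemovable G s) : (G.induce sᶜ).Connected :=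
  let ⟨φ⟩ := hs.2.2
  φ.connected_iff.mp hc

lemma IsRemovable.exists_walk_support_subset_compl (hc : G.Connected) {s : Set V}
    (hs : IsRemovable G s) {u v : V} (hu : u ∉ s) (hv : v ∉ s) :
    ∃ w : G.Walk u v, ∀ x ∈ w.support, x ∉ s := by
  obtain ⟨w⟩ := (hs.connected_induce_compl hc).preconnected ⟨u, hu⟩ ⟨v, hv⟩
  refine ⟨w.map (Embedding.induce sᶜ).toHom, fun x hx => ?_⟩
  obtain ⟨y, -, rfl⟩ := List.mem_map.mp ((w.support_map _) ▸ hx)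
  exact y.2

lemma SimpleGraph.Walk.exists_walk_to_first_exit {S : Set V} {u v : V} (w : G.Walk u v)
    (hv : v ∉ S) : ∃ x ∉ S, ∃ p : G.Walk u x,
      p.support ⊆ w.support ∧ ∀ y ∈ p.support, y ≠ x → y ∈ S := by
  induction w with
  | nil => exact ⟨_, hv, .nil, fun _ h => h, by simp⟩
  | @cons u' _ _ h w ih =>
    by_cases hu : u' ∈ S
    · obtain ⟨x, hx, p, hsub, hin⟩ := ih hv
      refine ⟨x, hx, .cons h p, List.cons_subset_cons _ hsub, ?_⟩
      simp only [support_cons, List.mem_cons, forall_eq_or_imp]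
      exact ⟨fun _ => hu, hin⟩
    · exact ⟨u', hu, .nil, by simp, by simp⟩

lemma SimpleGraph.Walk.exists_path_to_first_exit {S : Set V} {u v : V} (w : G.Walk u v)
    (hv : v ∉ S) : ∃ x ∉ S, ∃ p : G.Walk u x,
      p.IsPath ∧ p.support ⊆ w.support ∧ ∀ y ∈ p.support, y ≠ x → y ∈ S := by
  classical
  obtain ⟨x, hx, p, hsub, hin⟩ := w.exists_walk_to_first_exit hv
  have hbp := p.support_bypass_subset_support
  exact ⟨x, hx, p.bypass, p.bypass_isPath, fun y hy => hsub (hbp hy),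
    fun y hy => hin y (hbp hy)⟩

lemma SimpleGraph.exists_ray_of_forall_exists_adj {σ : Type*} (tip : σ → V)
    (used : σ → Set V) (htip : ∀ c, tip c ∉ used c)
    (hstep : ∀ c, ∃ d, G.Adj (tip c) (tip d) ∧ insert (tip c) (used c) ⊆ used d)
    (c₀ : σ) :
    ∃ f : ℕ → V, Injective f ∧ ∀ n, G.Adj (f n) (f (n + 1)) := by
  choose next hadj hused using hstep
  let S : ℕ → σ := fun n => Nat.rec c₀ (fun _ => next) n
  have hmono : Monotone (used ∘ S) :=
    monotone_nat_of_le_succ fun n => (subset_insert _ _).trans (hused (S n))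
  have hlt : ∀ m n, m < n → tip (S m) ≠ tip (S n) := fun m n hmn heq =>
    htip (S n) (heq ▸ hmono (Nat.succ_le_of_lt hmn) (hused (S m) (mem_insert _ _)))
  refine ⟨tip ∘ S, fun m n h => ?_, fun n => hadj (S n)⟩
  rcases lt_trichotomy m n with hmn | rfl | hnm
  · exact absurd h (hlt m n hmn)
  · rfl
  · exact absurd h.symm (hlt n m hnm)

/-- A partial ray: `used` holds the vertices visited before `tip`, and the ray continues along the
path `walk`, which stays inside the removable set `s` until it leaves it at `target`. -/
structure RayState (G : SimpleGraph V) where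
  used : Set V
  s : Set V
  isRemovable : IsRemovable G s
  used_subset : used ⊆ s
  tip : V
  target : V
  target_notMem : target ∉ s
  walk : G.Walk tip target
  isPath : walk.IsPath
  notMem_used : ∀ y ∈ walk.support, y ∉ used
  mem_of_ne_target : ∀ y ∈ walk.support, y ≠ target → y ∈ s

namespace RayState

lemma tip_notMem_used (c : RayState G) : c.tip ∉ c.used :=
  c.notMem_used _ c.walk.start_mem_support

lemma exists_advance (c : RayState G) (h : c.tip ∈ c.s) :
    ∃ d : RayState G, G.Adj c.tip d.tip ∧ insert c.tip c.used ⊆ d.used := by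
  obtain ⟨used, s, hs, hus, e, q, hq, w, hw, hwu, hws⟩ := c
  cases w with
  | nil => exact absurd h hq
  | cons hadj p =>
    rw [Walk.cons_isPath_iff] at hw
    simp only [Walk.support_cons, List.mem_cons, forall_eq_or_imp] at hwu hws
    refine ⟨⟨insert e used, s, hs, insert_subset h hus, _, q, hq, p, hw.1,
      fun y hy => ?_, hws.2⟩, hadj, subset_rfl⟩
    rintro (rfl | hyu)
    · exact hw.2 hy
    · exact hwu.2 y hy hyu

lemma exists_tip_mem (hc : G.Connected) (hcov : ∀ v, ∃ t, IsRemovable G t ∧ v ∈ t)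
    (c : RayState G) (h : c.tip ∉ c.s) :
    ∃ d : RayState G, d.tip = c.tip ∧ d.used = c.used ∧ d.tip ∈ d.s := by
  obtain ⟨s', hs', hsub⟩ := c.isRemovable.exists_insert_subset hcov c.tip
  obtain ⟨q', hq'⟩ := nonempty_compl.mpr hs'.2.1
  obtain ⟨w, hw⟩ := c.isRemovable.exists_walk_support_subset_compl hc h
    (fun hq's => hq' (hsub (mem_insert_of_mem _ hq's)))
  obtain ⟨x, hx, p, hp, hpw, hps'⟩ := w.exists_path_to_first_exit hq'
  exact ⟨⟨c.used, s', hs', (c.used_subset.trans (subset_insert _ _)).trans hsub, c.tip, x, hx,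
    p, hp, fun y hy hyu => hw y (hpw hy) (c.used_subset hyu), hps'⟩,
    rfl, rfl, hsub (mem_insert _ _)⟩

lemma exists_next (hc : G.Connected) (hcov : ∀ v, ∃ t, IsRemovable G t ∧ v ∈ t)
    (c : RayState G) :
    ∃ d : RayState G, G.Adj c.tip d.tip ∧ insert c.tip c.used ⊆ d.used := by
  by_cases h : c.tip ∈ c.s
  · exact c.exists_advance h
  obtain ⟨c', htip, hused, h'⟩ := c.exists_tip_mem hc hcov h
  rw [← htip, ← hused]
  exact c'.exists_advance h'

end RayState

lemma exists_ray_of_forall_mem_isRemovable (hc : G.Connected)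
    (hcov : ∀ v, ∃ t, IsRemovable G t ∧ v ∈ t) {s : Set V} (hs : IsRemovable G s) :
    ∃ f : ℕ → V, Injective f ∧ ∀ n, G.Adj (f n) (f (n + 1)) := by
  obtain ⟨q, hq⟩ := nonempty_compl.mpr hs.2.1
  exact exists_ray_of_forall_exists_adj RayState.tip RayState.used RayState.tip_notMem_used
    (RayState.exists_next hc hcov)
    ⟨∅, s, hs, empty_subset _, q, q, hq, .nil, .nil, fun _ _ => notMem_empty _, by simp⟩

lemma SelfContained.exists_isRemovable [Nonempty V] (hG : SelfContained G) :
    ∃ s, IsRemovable G s := by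
  obtain ⟨t, ht, ⟨φ⟩⟩ := hG
  obtain ⟨v⟩ := ‹Nonempty V›
  exact ⟨tᶜ, nonempty_compl.mpr ht, compl_ne_univ.mpr ⟨φ v, (φ v).2⟩,
    by rw [compl_compl]; exact ⟨φ⟩⟩

end

theorem stmt6 {V : Type*} (G : SimpleGraph V) (hG : SelfContained G)
    (hc : G.Connected)
    (hray : ¬∃ f : ℕ → V, Function.Injective f ∧ ∀ n, G.Adj (f n) (f (n + 1))) :
    (FndSet G).Nonempty := by
  by_contra hfnd
  have hcov : ∀ v, ∃ s, IsRemovable G s ∧ v ∈ s := fun v => by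
    by_contra! hv
    exact hfnd ⟨v, hv⟩
  have := hc.nonempty
  obtain ⟨s, hs⟩ := hG.exists_isRemovable
  exact hray (exists_ray_of_forall_mem_isRemovable hc hcov hs)
end

section
/- Let G be a self-contained graph such that only finitely many vertices of the foundation Fnd(G) have finite degree in G. If v is a vertex of Fnd(G) with finite degree in G, then every neighbor of v in G lies in Fnd(G). -/
open SimpleGraph Function Set

section Aux

variable {V W : Type*} {G : SimpleGraph V} {H : SimpleGraph W}

/-- Isomorphism of induced subgraphs along an isomorphism. -/
def auxIsoInduce (θ : G ≃g H) (t : Set V) (u : Set W) (h : ∀ a, a ∈ t ↔ θ a ∈ u) :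
    G.induce t ≃g H.induce u where
  toEquiv := θ.toEquiv.subtypeEquiv h
  map_rel_iff' := θ.map_rel_iff

/-- An induced subgraph of an induced subgraph is an induced subgraph. -/
def auxNestIso (G : SimpleGraph V) (s : Set V) (r : Set ↥sᶜ) :
    (G.induce sᶜ).induce rᶜ ≃g G.induce (s ∪ (Subtype.val '' r))ᶜ where
  toEquiv :=
    { toFun := fun x => ⟨x.1.1, by
        rintro (h1 | ⟨y, hy, hxy⟩)
        · exact x.1.2 h1
        · exact x.2 (by rwa [Subtype.val_injective hxy] at hy)⟩
      invFun := fun y => ⟨⟨y.1, fun h => y.2 (Or.inl h)⟩,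
        fun h => y.2 (Or.inr ⟨_, h, rfl⟩)⟩
      left_inv := fun x => rfl
      right_inv := fun y => rfl }
  map_rel_iff' := Iff.rfl

/-- The foundation is invariant under isomorphisms. -/
lemma aux_fnd_map (θ : G ≃g H) {u : V} (hu : u ∈ FndSet G) : θ u ∈ FndSet H := by
  simp only [FndSet, Set.mem_setOf_eq] at hu ⊢
  intro t ht hmem
  refine hu (θ ⁻¹' t) ⟨⟨u, hmem⟩, ?_, ?_⟩ hmem
  · obtain ⟨b, hb⟩ := (Set.ne_univ_iff_exists_notMem t).mp ht.2.1
    intro hEq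
    have h1 : θ.symm b ∈ θ ⁻¹' t := hEq ▸ Set.mem_univ _
    rw [Set.mem_preimage, θ.apply_symm_apply] at h1
    exact hb h1
  · obtain ⟨ρ⟩ := ht.2.2
    exact ⟨(θ.trans ρ).trans (auxIsoInduce θ (θ ⁻¹' t)ᶜ tᶜ (fun a => Iff.rfl)).symm⟩

/-- Foundation vertices of `G` remain foundation vertices after deleting a
removable set. -/
lemma aux_fnd_induce {s : Set V} (hs : IsRemovable G s) {u : V} (hu : u ∈ FndSet G) :
    ∃ h : u ∈ sᶜ, (⟨u, h⟩ : ↥sᶜ) ∈ FndSet (G.induce sᶜ) := by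
  have hus : u ∈ sᶜ := hu s hs
  refine ⟨hus, ?_⟩
  simp only [FndSet, Set.mem_setOf_eq]
  intro r hr hmem
  obtain ⟨φ⟩ := hs.2.2
  obtain ⟨ψ⟩ := hr.2.2
  refine hu (s ∪ (Subtype.val '' r)) ⟨hs.1.mono Set.subset_union_left, ?_,
      ⟨(φ.trans ψ).trans (auxNestIso G s r)⟩⟩ (Or.inr ⟨⟨u, hus⟩, hmem, rfl⟩)
  obtain ⟨x, hx⟩ := (Set.ne_univ_iff_exists_notMem r).mp hr.2.1
  intro hEq
  have h1 : (x : V) ∈ s ∪ (Subtype.val '' r) := hEq ▸ Set.mem_univ _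
  rcases h1 with h1 | ⟨y, hy, hxy⟩
  · exact x.2 h1
  · exact hx (by rwa [Subtype.val_injective hxy] at hy)

end Aux

theorem stmt7 {V : Type*} (G : SimpleGraph V) (hG : SelfContained G)
    (hfin : {v | v ∈ FndSet G ∧ (G.neighborSet v).Finite}.Finite)
    (v : V) (hv : v ∈ FndSet G) (hd : (G.neighborSet v).Finite) :
    ∀ w, G.Adj v w → w ∈ FndSet G := by
  classical
  intro w hw
  by_contra hwF
  simp only [FndSet, Set.mem_setOf_eq, not_forall, not_not] at hwF
  obtain ⟨s, hs, hws⟩ := hwF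
  obtain ⟨φ⟩ := hs.2.2
  set G' := G.induce sᶜ with hG'
  set A : Set V := {v | v ∈ FndSet G ∧ (G.neighborSet v).Finite} with hA
  set B : Set ↥sᶜ := {b | b ∈ FndSet G' ∧ (G'.neighborSet b).Finite} with hB
  set dG : V → ℕ := fun u => (G.neighborSet u).ncard with hdG
  set dG' : ↥sᶜ → ℕ := fun b => (G'.neighborSet b).ncard with hdG'
  -- degrees are preserved by φ
  have hdeg : ∀ u : V, dG' (φ u) = dG u := fun u =>
    (Nat.card_congr (φ.mapNeighborSet u)).symm
  have hfinmap : ∀ u : V, (G.neighborSet u).Finite → (G'.neighborSet (φ u)).Finite := by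
    intro u hu
    rw [← Set.finite_coe_iff] at hu ⊢
    exact Finite.of_equiv _ (φ.mapNeighborSet u)
  -- neighbor sets in G' inject into neighbor sets in G
  have hsubN : ∀ (u : V) (h : u ∈ sᶜ),
      Subtype.val '' (G'.neighborSet ⟨u, h⟩) ⊆ G.neighborSet u := by
    rintro u h _ ⟨b, hb, rfl⟩
    exact hb
  have hNfin : ∀ (u : V) (h : u ∈ sᶜ), (G.neighborSet u).Finite →
      (G'.neighborSet ⟨u, h⟩).Finite := by
    intro u h hfu
    have := hfu.subset (hsubN u h)
    exact Set.Finite.of_finite_image this (Set.injOn_of_injective Subtype.val_injective)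
  -- B = φ '' A
  have hBA : B = φ '' A := by
    ext b
    constructor
    · rintro ⟨hb1, hb2⟩
      refine ⟨φ.symm b, ⟨?_, ?_⟩, φ.apply_symm_apply b⟩
      · exact aux_fnd_map φ.symm hb1
      · have := hb2.to_subtype
        rw [← Set.finite_coe_iff]
        exact Finite.of_equiv _ (φ.symm.mapNeighborSet b)
    · rintro ⟨u, ⟨hu1, hu2⟩, rfl⟩
      exact ⟨aux_fnd_map φ hu1, hfinmap u hu2⟩
  have hBfin : B.Finite := hBA ▸ hfin.image φ
  -- A ⊆ val '' B
  have hAsub : A ⊆ Subtype.val '' B := by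
    rintro u ⟨hu1, hu2⟩
    obtain ⟨h, hfnd⟩ := aux_fnd_induce hs hu1
    exact ⟨⟨u, h⟩, ⟨hfnd, hNfin u h hu2⟩, rfl⟩
  -- counting: val '' B = A
  have hcard : (Subtype.val '' B).ncard = A.ncard := by
    rw [Set.ncard_image_of_injective _ Subtype.val_injective, hBA,
      Set.ncard_image_of_injective _ φ.injective]
  have hAeq : A = Subtype.val '' B :=
    Set.eq_of_subset_of_ncard_le hAsub hcard.le (hBfin.image _)
  -- the auxiliary degree function on V
  set f : V → ℕ := fun u => if h : u ∈ sᶜ then dG' ⟨u, h⟩ else 0 with hf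
  -- sum identities
  have sum1 : ∑ u ∈ hfin.toFinset, dG u = ∑ b ∈ hBfin.toFinset, dG' b := by
    refine Finset.sum_bij (fun u _ => φ u) ?_ ?_ ?_ ?_
    · intro a ha
      rw [Set.Finite.mem_toFinset] at ha ⊢
      rw [hBA]; exact ⟨a, ha, rfl⟩
    · intro a₁ _ a₂ _ h
      exact φ.toEquiv.injective h
    · intro b hb
      rw [Set.Finite.mem_toFinset, hBA] at hb
      obtain ⟨u, hu, rfl⟩ := hb
      exact ⟨u, by rwa [Set.Finite.mem_toFinset], rfl⟩
    · intro a _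
      exact (hdeg a).symm
  have sum2 : ∑ b ∈ hBfin.toFinset, dG' b = ∑ u ∈ hfin.toFinset, f u := by
    refine Finset.sum_bij (fun b _ => (b : V)) ?_ ?_ ?_ ?_
    · intro b hb
      rw [Set.Finite.mem_toFinset] at hb ⊢
      show (b : V) ∈ A
      rw [hAeq]
      exact ⟨b, hb, rfl⟩
    · intro b₁ _ b₂ _ h
      exact Subtype.val_injective h
    · intro u hu
      rw [Set.Finite.mem_toFinset] at hu
      have := hAsub hu
      obtain ⟨b, hb, rfl⟩ := this
      exact ⟨b, by rwa [Set.Finite.mem_toFinset], rfl⟩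
    · intro b _
      simp only [hf, dif_pos b.2]
  -- pointwise inequality f ≤ dG on A, strict at v
  have hle : ∀ u ∈ hfin.toFinset, f u ≤ dG u := by
    intro u hu
    rw [Set.Finite.mem_toFinset] at hu
    have h : u ∈ sᶜ := hu.1 s hs
    rw [hf]
    simp only [dif_pos h]
    calc dG' ⟨u, h⟩ = (Subtype.val '' (G'.neighborSet ⟨u, h⟩)).ncard :=
          (Set.ncard_image_of_injective _ Subtype.val_injective).symm
      _ ≤ dG u := Set.ncard_le_ncard (hsubN u h) hu.2
  have hvA : v ∈ hfin.toFinset := by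
    rw [Set.Finite.mem_toFinset]; exact ⟨hv, hd⟩
  have hlt : f v < dG v := by
    have h : v ∈ sᶜ := hv s hs
    rw [hf]
    simp only [dif_pos h]
    have hsub2 : Subtype.val '' (G'.neighborSet ⟨v, h⟩) ⊆ G.neighborSet v \ {w} := by
      rintro _ ⟨b, hb, rfl⟩
      refine ⟨hb, ?_⟩
      intro hbw
      exact b.2 (hbw ▸ hws)
    calc dG' ⟨v, h⟩ = (Subtype.val '' (G'.neighborSet ⟨v, h⟩)).ncard :=
          (Set.ncard_image_of_injective _ Subtype.val_injective).symm
      _ ≤ (G.neighborSet v \ {w}).ncard :=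
          Set.ncard_le_ncard hsub2 (hd.subset Set.diff_subset)
      _ < dG v := Set.ncard_diff_singleton_lt_of_mem hw hd
  have : ∑ u ∈ hfin.toFinset, f u < ∑ u ∈ hfin.toFinset, dG u :=
    Finset.sum_lt_sum hle ⟨v, hvA, hlt⟩
  rw [sum1, sum2] at this
  exact lt_irrefl _ this
end

section
/- Let G be a self-contained graph and P, Q removable subgraphs of G with P an induced subgraph of Q (V(P) ⊆ V(Q)). Then every twisted vertex for P is a twisted vertex for Q, i.e., Tor_G(P) is an induced subgraph of Tor_G(Q). -/
open SimpleGraph Function Set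

/-- Induce of an induce is an induce. -/
def isoSub {V : Type*} (G : SimpleGraph V) (A B : Set V) (hBA : B ⊆ A) :
    (G.induce A).induce {x : ↥A | (x : V) ∈ B} ≃g G.induce B where
  toEquiv :=
    { toFun := fun x => ⟨x.1.1, x.2⟩
      invFun := fun x => ⟨⟨x.1, hBA x.2⟩, x.2⟩
      left_inv := fun x => rfl
      right_inv := fun x => rfl }
  map_rel_iff' := Iff.rfl

/-- Iterated induce identified with induce on a subset. -/
def isoSub2 {V : Type*} (G : SimpleGraph V) (A B : Set V) (hBA : B ⊆ A) (s : Set ↥B) :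
    (G.induce A).induce {x : ↥A | ∃ h : (x : V) ∈ B, (⟨x, h⟩ : ↥B) ∈ s} ≃g
      (G.induce B).induce s where
  toEquiv :=
    { toFun := fun x => ⟨⟨x.1.1, x.2.choose⟩, x.2.choose_spec⟩
      invFun := fun y => ⟨⟨y.1.1, hBA y.1.2⟩, ⟨y.1.2, y.2⟩⟩
      left_inv := fun x => rfl
      right_inv := fun y => rfl }
  map_rel_iff' := Iff.rfl

theorem stmt9 {V : Type*} (G : SimpleGraph V) (hG : SelfContained G)
    (p q : Set V) (hp : IsRemovable G p) (hq : IsRemovable G q) (hpq : p ⊆ q) :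
    TorSet G p ⊆ TorSet G q := by
  obtain ⟨-, -, ⟨ep⟩⟩ := hp
  obtain ⟨-, hqne, ⟨eq'⟩⟩ := hq
  have hcc : qᶜ ⊆ pᶜ := compl_subset_compl.mpr hpq
  rintro v ⟨hrem, hvp, hfnd⟩
  -- Step 1: v ∉ q.
  have hvq : v ∈ qᶜ := by
    by_contra hvq
    have hvq' : v ∈ q := not_not.mp hvq
    -- q ∖ p is removable in G.induce pᶜ and contains v
    refine hfnd {x : ↥pᶜ | (x : V) ∈ q} ⟨⟨⟨v, hvp⟩, hvq'⟩, ?_, ?_⟩ hvq'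
    · intro hu
      obtain ⟨w, hw⟩ := nonempty_compl.mpr hqne
      have : (⟨w, hcc hw⟩ : ↥pᶜ) ∈ ({x : ↥pᶜ | (x : V) ∈ q} : Set ↥pᶜ) := by
        rw [hu]; trivial
      exact hw this
    · have hcompl : ({x : ↥pᶜ | (x : V) ∈ q} : Set ↥pᶜ)ᶜ = {x : ↥pᶜ | (x : V) ∈ qᶜ} := rfl
      rw [hcompl]
      exact ⟨(ep.symm.trans eq').trans (isoSub G pᶜ qᶜ hcc).symm⟩
  -- Step 2: v is in the foundation of G.induce qᶜ.
  refine ⟨hrem, hvq, ?_⟩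
  intro s ⟨hsne, hsu, ⟨es⟩⟩ hvs
  -- Pull back sᶜ ⊆ qᶜ to a subset of pᶜ; its complement is removable in G.induce pᶜ.
  set r : Set ↥pᶜ := {x : ↥pᶜ | ∃ h : (x : V) ∈ qᶜ, (⟨x, h⟩ : ↥qᶜ) ∈ sᶜ} with hr
  refine hfnd rᶜ ⟨⟨⟨v, hvp⟩, ?_⟩, ?_, ?_⟩ ?_
  · rintro ⟨h1, h2⟩
    exact h2 (by convert hvs)
  · intro hu
    obtain ⟨w, hw⟩ := nonempty_compl.mpr hsu
    have hmem : (⟨(w : V), hcc w.2⟩ : ↥pᶜ) ∈ r := ⟨w.2, by convert hw⟩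
    have : (⟨(w : V), hcc w.2⟩ : ↥pᶜ) ∈ rᶜ := by rw [hu]; trivial
    exact this hmem
  · rw [compl_compl]
    exact ⟨((ep.symm.trans eq').trans es).trans (isoSub2 G pᶜ qᶜ hcc sᶜ).symm⟩
  · rintro ⟨h1, h2⟩
    exact h2 (by convert hvs)
end

section
/- Let G be a self-contained graph and P, Q removable subgraphs of G with disjoint vertex sets. Then G[V(P) ∪ V(Q)] is a removable subgraph of G if and only if there exists an isomorphism f : G → G \ P such that the preimage f^{-1}(Q) is a removable subgraph of G. -/
open SimpleGraph Function Set

/-- Restriction of an isomorphism `f : G ≃g G.induce t` to the complement of the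
preimage of `q`. -/
noncomputable def restrictIso {V : Type*} (G : SimpleGraph V) (t q : Set V)
    (f : G ≃g G.induce t) :
    G.induce ((fun v => (f v : V)) ⁻¹' q)ᶜ ≃g G.induce (t ∩ qᶜ) where
  toFun x := ⟨(f x.1 : V), (f x.1).2, x.2⟩
  invFun y := ⟨f.symm ⟨y.1, y.2.1⟩, by
    have : (f (f.symm ⟨y.1, y.2.1⟩) : V) = y.1 := by
      rw [f.apply_symm_apply]
    simp only [Set.mem_compl_iff, Set.mem_preimage, this]
    exact y.2.2⟩
  left_inv x := by
    ext
    simp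
  right_inv y := by
    ext
    simp
  map_rel_iff' {a b} := f.map_rel_iff

theorem stmt12 {V : Type*} (G : SimpleGraph V) (hG : SelfContained G)
    (p q : Set V) (hp : IsRemovable G p) (hq : IsRemovable G q)
    (hd : Disjoint p q) :
    IsRemovable G (p ∪ q) ↔
      ∃ f : G ≃g G.induce pᶜ, IsRemovable G ((fun v => (f v : V)) ⁻¹' q) := by
  have hqp : q ⊆ pᶜ := fun v hv hpv => Set.disjoint_left.mp hd hpv hv
  have hcompl : (p ∪ q)ᶜ = pᶜ ∩ qᶜ := Set.compl_union p q
  constructor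
  · rintro ⟨hne, hnu, ⟨h⟩⟩
    obtain ⟨-, -, ⟨f⟩⟩ := hp
    refine ⟨f, ?_, ?_, ?_⟩
    · obtain ⟨v, hv⟩ := hq.1
      exact ⟨f.symm ⟨v, hqp hv⟩, by
        simp only [Set.mem_preimage, f.apply_symm_apply]; exact hv⟩
    · intro huniv
      have hne' : ((p ∪ q)ᶜ).Nonempty := Set.nonempty_compl.mpr hnu
      obtain ⟨w, hw⟩ := hne'
      rw [hcompl] at hw
      have : f.symm ⟨w, hw.1⟩ ∈ ((fun v => (f v : V)) ⁻¹' q) := huniv ▸ Set.mem_univ _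
      simp only [Set.mem_preimage, f.apply_symm_apply] at this
      exact hw.2 this
    · have e := restrictIso G pᶜ q f
      rw [hcompl] at h
      exact ⟨h.trans e.symm⟩
  · rintro ⟨f, hs, hsu, ⟨g⟩⟩
    refine ⟨hp.1.mono Set.subset_union_left, ?_, ?_⟩
    · intro huniv
      apply hsu
      ext v
      simp only [Set.mem_preimage, Set.mem_univ, iff_true]
      have : (f v : V) ∈ p ∪ q := huniv ▸ Set.mem_univ _
      rcases this with h | h
      · exact absurd h (f v).2
      · exact h
    · have e := restrictIso G pᶜ q f
      rw [hcompl]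
      exact ⟨g.trans e⟩
end

section
/- Let G be a self-contained graph, P and Q removable subgraphs of G with disjoint vertex sets, and suppose there exists an isomorphism f : G → G \ P with f(Q) = Q (f maps V(Q) onto V(Q)). Then G[V(P) ∪ V(Q)] is a removable subgraph of G. -/
open SimpleGraph Function Set

theorem stmt13 {V : Type*} (G : SimpleGraph V) (hG : SelfContained G)
    (p q : Set V) (hp : IsRemovable G p) (hq : IsRemovable G q)
    (hd : Disjoint p q)
    (hf : ∃ f : G ≃g G.induce pᶜ, (fun v => (f v : V)) '' q = q) :
    IsRemovable G (p ∪ q) := by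
  obtain ⟨f, hfq⟩ := hf
  obtain ⟨g⟩ := hq.2.2
  have hq_fix : ∀ v : V, (f v : V) ∈ q ↔ v ∈ q := by
    intro v
    constructor
    · intro hv
      rw [← hfq] at hv
      obtain ⟨w, hw, hvw⟩ := hv
      have : f w = f v := Subtype.ext hvw
      rwa [← f.injective this]
    · intro hv
      rw [← hfq]; exact ⟨v, hv, rfl⟩
  refine ⟨hp.1.mono subset_union_left, ?_, ?_⟩
  · obtain ⟨x, hx⟩ := hp.1
    intro h
    have h2 : (f x : V) ∉ q := by
      rw [hq_fix]; exact fun hxq => hd.ne_of_mem hx hxq rfl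
    have hm : (f x : V) ∈ p ∪ q := h ▸ Set.mem_univ _
    rcases hm with h' | h'
    · exact (f x).2 h'
    · exact h2 h'
  · have toMem : ∀ x : ↥qᶜ, (f x : V) ∈ (p ∪ q)ᶜ := by
      intro x hmem
      rcases hmem with h | h
      · exact (f x).2 h
      · exact x.2 ((hq_fix _).1 h)
    have invMem : ∀ y : ↥((p ∪ q)ᶜ),
        (f.symm ⟨(y : V), fun hp' => y.2 (Or.inl hp')⟩ : V) ∈ qᶜ := by
      intro y hz
      apply y.2
      right
      have := (hq_fix _).2 hz
      rwa [f.apply_symm_apply] at this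
    refine ⟨g.trans ⟨Equiv.mk (fun x => ⟨(f x : V), toMem x⟩)
      (fun y => ⟨(f.symm ⟨(y : V), fun hp' => y.2 (Or.inl hp')⟩ : V), invMem y⟩)
      ?_ ?_, ?_⟩⟩
    · intro x
      ext
      simp
    · intro y
      ext
      simp
    · intro a b
      simpa [SimpleGraph.comap] using f.map_adj_iff (v := (a : V)) (w := (b : V))
end

section
/- Let G be a self-contained graph and H an arbitrary nonempty graph. Then the Cartesian product G □ H is a self-contained graph. Moreover, if P is a removable subgraph of G, then P □ H is a removable subgraph of G □ H. -/
open SimpleGraph Function Set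

/-- Lift an iso `G ≃g G'` to the box products. -/
def isoBoxLeft {V V' W : Type*} {G : SimpleGraph V} {G' : SimpleGraph V'}
    (H : SimpleGraph W) (φ : G ≃g G') : (G □ H) ≃g (G' □ H) where
  toEquiv := Equiv.prodCongrLeft (fun _ => φ.toEquiv)
  map_rel_iff' := by
    intro x y
    simp [SimpleGraph.boxProd_adj, Equiv.prodCongrLeft, φ.map_rel_iff,
      φ.toEquiv.injective.eq_iff]

/-- Induced subgraph of a box product on `s ×ˢ univ`. -/
def induceBox {V W : Type*} (G : SimpleGraph V) (H : SimpleGraph W) (s : Set V) :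
    ((G □ H).induce (s ×ˢ (Set.univ : Set W))) ≃g ((G.induce s) □ H) where
  toEquiv :=
    { toFun := fun x => (⟨x.1.1, x.2.1⟩, x.1.2)
      invFun := fun x => ⟨(x.1.1, x.2), ⟨x.1.2, trivial⟩⟩
      left_inv := fun x => rfl
      right_inv := fun x => rfl }
  map_rel_iff' := by
    intro x y
    simp only [Equiv.coe_fn_mk, SimpleGraph.comap_adj, Embedding.coe_subtype,
      SimpleGraph.boxProd_adj, Subtype.ext_iff]


theorem stmt14 {V W : Type*} [Nonempty W] (G : SimpleGraph V) (H : SimpleGraph W)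
    (hG : SelfContained G) :
    SelfContained (G □ H) ∧
      ∀ p : Set V, IsRemovable G p → IsRemovable (G □ H) (p ×ˢ Set.univ) := by
  obtain ⟨w⟩ := ‹Nonempty W›
  have hne : ∀ s : Set V, s ≠ Set.univ → (s ×ˢ (Set.univ : Set W)) ≠ Set.univ := by
    intro s hs h
    obtain ⟨v, hv⟩ := (Set.ne_univ_iff_exists_notMem s).mp hs
    exact hv ((Set.eq_univ_iff_forall.mp h (v, w)).1)
  have key : ∀ s : Set V, (G ≃g G.induce s) →
      ((G □ H) ≃g (G □ H).induce (s ×ˢ (Set.univ : Set W))) := by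
    intro s φ
    exact (isoBoxLeft H φ).trans (induceBox G H s).symm
  constructor
  · obtain ⟨t, ht, ⟨φ⟩⟩ := hG
    exact ⟨t ×ˢ Set.univ, hne t ht, ⟨key t φ⟩⟩
  · rintro p ⟨⟨v, hv⟩, hp, ⟨φ⟩⟩
    refine ⟨⟨(v, w), hv, trivial⟩, hne p hp, ?_⟩
    have hc : (p ×ˢ (Set.univ : Set W))ᶜ = pᶜ ×ˢ (Set.univ : Set W) := by
      ext x; simp [Set.mem_prod]
    rw [hc]
    exact ⟨key pᶜ φ⟩
end

section
/- The graph G on vertex set ℕ (including 0), where 0 is adjacent to every positive integer and each positive integer n is adjacent to 0, n−1 (if n ≥ 2) and n+1, is a self-contained graph: G is isomorphic to the induced subgraph obtained by deleting the vertex 1. Moreover, the vertex 0 belongs to no removable subgraph of G. -/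
open SimpleGraph Function Set

/-- The graph on ℕ in which `0` is adjacent to every positive integer and every
positive `n` is adjacent to `n+1` (hence also to `n-1` for `n ≥ 2`). -/
def G16 : SimpleGraph ℕ :=
  SimpleGraph.fromRel (fun a b => (a = 0 ∧ b ≠ 0) ∨ (b = a + 1 ∧ a ≠ 0))

lemma adj16 (a b : ℕ) : G16.Adj a b ↔ a ≠ b ∧ (a = 0 ∨ b = 0 ∨ b = a + 1 ∨ a = b + 1) := by
  simp only [G16, fromRel_adj, ne_eq]
  omega

/-- The shift bijection `ℕ ≃ ℕ \ {1}`, sending `0 ↦ 0` and `n ↦ n + 1` for `n ≥ 1`. -/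
noncomputable def e16 : ℕ ≃ (({1} : Set ℕ)ᶜ : Set ℕ) where
  toFun n := ⟨if n = 0 then 0 else n + 1, by simp; split <;> omega⟩
  invFun m := m.val - 1
  left_inv n := by dsimp; split <;> omega
  right_inv m := by
    have h1 : m.val ≠ 1 := m.2
    apply Subtype.ext
    dsimp
    split <;> omega

noncomputable def iso16 : G16 ≃g G16.induce (({1} : Set ℕ)ᶜ) where
  toEquiv := e16
  map_rel_iff' := by
    intro a b
    simp only [e16, comap_adj, Equiv.coe_fn_mk, Function.Embedding.coe_subtype, adj16]
    split_ifs <;> simp_all <;> omega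

lemma part3_16 : ∀ s : Set ℕ, IsRemovable G16 s → 0 ∉ s := by
  rintro s ⟨-, -, ⟨φ⟩⟩ h0
  have hinf : (G16.neighborSet 0).Infinite := by
    have : ({0}ᶜ : Set ℕ) ⊆ G16.neighborSet 0 := by
      intro b hb
      simp only [Set.mem_compl_iff, Set.mem_singleton_iff] at hb
      exact (adj16 0 b).mpr ⟨Ne.symm hb, Or.inl rfl⟩
    exact (Set.Finite.infinite_compl (Set.finite_singleton 0)).mono this
  have hinf2 : ((G16.induce sᶜ).neighborSet (φ 0)).Infinite := by
    rw [← Set.infinite_coe_iff] at hinf ⊢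
    exact ((φ.mapNeighborSet 0).infinite_iff).mp hinf
  set v := φ 0 with hv
  have hm : v.val ≠ 0 := fun h => (v.2 : v.val ∈ sᶜ) (h ▸ h0)
  have hsub : (G16.induce sᶜ).neighborSet v ⊆
      Subtype.val ⁻¹' ({v.val - 1, v.val + 1} : Set ℕ) := by
    intro w hw
    have hw0 : w.val ≠ 0 := fun h => (w.2 : w.val ∈ sᶜ) (h ▸ h0)
    simp only [mem_neighborSet, comap_adj, Function.Embedding.coe_subtype, adj16] at hw
    simp only [Set.mem_preimage, Set.mem_insert_iff, Set.mem_singleton_iff]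
    omega
  have hfin : (Subtype.val ⁻¹' ({v.val - 1, v.val + 1} : Set ℕ) : Set ↥sᶜ).Finite :=
    Set.Finite.preimage (Set.injOn_of_injective Subtype.val_injective)
      ((Set.finite_singleton _).insert _)
  exact hinf2 (hfin.subset hsub)

theorem stmt16 :
    Nonempty (G16 ≃g G16.induce (({1} : Set ℕ)ᶜ)) ∧ SelfContained G16 ∧
      ∀ s : Set ℕ, IsRemovable G16 s → 0 ∉ s := by
  refine ⟨⟨iso16⟩, ⟨({1} : Set ℕ)ᶜ, ?_, ⟨iso16⟩⟩, part3_16⟩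
  intro h
  have : (1 : ℕ) ∈ (({1} : Set ℕ)ᶜ) := h ▸ Set.mem_univ 1
  simp at this
end

section
/- The ℕ × ℕ grid, i.e., the graph on ℕ² in which (m,n) and (m',n') are adjacent iff |m − m'| + |n − n'| = 1, is a self-contained graph with empty foundation: every vertex belongs to some removable subgraph. -/
open SimpleGraph Function Set

/-- The ℕ × ℕ grid: `(m, n)` and `(m', n')` are adjacent iff `|m - m'| + |n - n'| = 1`. -/
def Grid : SimpleGraph (ℕ × ℕ) :=
  SimpleGraph.fromRel (fun p q =>
    ((p.1 : ℤ) - q.1).natAbs + ((p.2 : ℤ) - q.2).natAbs = 1)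


lemma grid_adj (p q : ℕ × ℕ) :
    Grid.Adj p q ↔
    p ≠ q ∧ ((p.1 : ℤ) - q.1).natAbs + ((p.2 : ℤ) - q.2).natAbs = 1 := by
  simp only [Grid, SimpleGraph.fromRel_adj]
  constructor
  · rintro ⟨h, h1 | h1⟩ <;> exact ⟨h, by omega⟩
  · rintro ⟨h, h1⟩; exact ⟨h, Or.inl h1⟩

/-- Shifting by `k+1` columns gives an isomorphism with the grid minus the
first `k+1` columns. -/
def shiftIso (k : ℕ) :
    Grid ≃g Grid.induce ({p : ℕ × ℕ | p.1 ≤ k}ᶜ) := by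
  refine ⟨⟨fun p => ⟨(p.1 + (k + 1), p.2), by simp only [Set.mem_compl_iff, Set.mem_setOf_eq, not_le]; omega⟩,
    fun q => (q.1.1 - (k + 1), q.1.2), fun p => by simp, fun q => ?_⟩, ?_⟩
  · have hq : k < q.1.1 := by
      have := q.2
      simp only [Set.mem_compl_iff, Set.mem_setOf_eq, not_le] at this
      exact this
    apply Subtype.ext
    simp only
    ext <;> simp <;> omega
  · intro p q
    simp only [SimpleGraph.comap_adj, Function.Embedding.coe_subtype, Equiv.coe_fn_mk,
      grid_adj, ne_eq, Subtype.mk.injEq, Prod.mk.injEq, Prod.ext_iff]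
    constructor
    · rintro ⟨h, h1⟩
      exact ⟨fun he => h ⟨by omega, he.2⟩, by push_cast at h1 ⊢; omega⟩
    · rintro ⟨h, h1⟩
      exact ⟨fun he => h ⟨by omega, he.2⟩, by push_cast at h1 ⊢; omega⟩

lemma removable_cols (k : ℕ) : IsRemovable Grid {p : ℕ × ℕ | p.1 ≤ k} := by
  refine ⟨⟨(0, 0), by simp⟩, ?_, ⟨shiftIso k⟩⟩
  intro h
  have : (k + 1, 0) ∈ ({p : ℕ × ℕ | p.1 ≤ k} : Set (ℕ × ℕ)) := by
    rw [h]; trivial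
  simp at this

theorem stmt17 :
    SelfContained Grid ∧ ∀ v : ℕ × ℕ, ∃ s, IsRemovable Grid s ∧ v ∈ s := by
  constructor
  · refine ⟨{p : ℕ × ℕ | p.1 ≤ 0}ᶜ, ?_, ⟨shiftIso 0⟩⟩
    intro h
    have : (0, 0) ∈ ({p : ℕ × ℕ | p.1 ≤ 0}ᶜ : Set (ℕ × ℕ)) := by rw [h]; trivial
    simp at this
  · intro v
    exact ⟨{p : ℕ × ℕ | p.1 ≤ v.1}, removable_cols v.1, by simp⟩
end
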